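/- Let S = [[1,0],[1,1]] and T_λ = [[1,2λ],[0,1]] in SL(2,ℂ). For each λ in {(1+i)/2, (1−i)/2, (−1+i)/2, (−1−i)/2}, the group G_λ generated by S and T_λ is not free on its generators: there exists a nontrivial element w of the free group on two generators whose evaluation at (S, T_λ) equals I or −I in SL(2,ℂ). -/

import Mathlib

noncomputable section

abbrev SL2 := Matrix.SpecialLinearGroup (Fin 2) ℂ

def S : SL2 := ⟨!![1, 0; 1, 1], by norm_num [Matrix.det_fin_two_of]⟩

def T (lam : ℂ) : SL2 := ⟨!![1, 2 * lam; 0, 1], by norm_num [Matrix.det_fin_two_of]⟩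

/-- The evaluation of a word in the free group on two generators at a pair `(a, b)`. -/
def evalWord (w : FreeGroup (Fin 2)) (a b : SL2) : SL2 :=
  FreeGroup.lift (fun i : Fin 2 => if i = 0 then a else b) w

/-- Some nontrivial word in the free group on two generators evaluates at `(a, b)`
to `I` or `-I` in `SL(2, ℂ)`. -/
def HasRelation (a b : SL2) : Prop :=
  ∃ w : FreeGroup (Fin 2), w ≠ 1 ∧
    (((evalWord w a b : SL2) : Matrix (Fin 2) (Fin 2) ℂ) = 1 ∨
     ((evalWord w a b : SL2) : Matrix (Fin 2) (Fin 2) ℂ) = -1)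

/-!
At `(S, T_λ)` the word `v = a b⁻¹ a⁻¹ b a⁻¹ b⁻¹ a` evaluates to a matrix with equal diagonal
entries and lower-left entry `4λ (2λ² - 2λ + 1)`. For `2λ = 1 ± i` it is therefore upper
triangular like `T_λ`, so the two commute and the commutator `⁅b, v⁆` is a nontrivial relator.
The remaining two points are the negatives of these, and `T_{-λ} = T_λ⁻¹` is absorbed by the
automorphism `b ↦ b⁻¹` of the free group.
-/

open FreeGroup
open scoped commutatorElement

lemma Matrix.commute_fin_two_of_upper_of_diag_eq {R : Type*} [CommRing R]
    {A B : Matrix (Fin 2) (Fin 2) R} (hA₁₀ : A 1 0 = 0) (hA : A 0 0 = A 1 1)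
    (hB₁₀ : B 1 0 = 0) (hB : B 0 0 = B 1 1) : Commute A B := by
  rw [A.eta_fin_two, B.eta_fin_two, hA₁₀, hB₁₀, hA, hB]
  simp only [Commute, SemiconjBy, mul_fin_two]
  ext i j
  fin_cases i <;> fin_cases j <;> simp [mul_comm, add_comm]

lemma hasRelation_inv_right {a b : SL2} (h : HasRelation a b) : HasRelation a b⁻¹ := by
  obtain ⟨w, hw, hrel⟩ := h
  let σ : FreeGroup (Fin 2) →* FreeGroup (Fin 2) :=
    FreeGroup.lift fun i => if i = 0 then of 0 else (of 1)⁻¹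
  have hσσ : ∀ w, σ (σ w) = w :=
    DFunLike.congr_fun (FreeGroup.ext_hom (σ.comp σ) (MonoidHom.id _) fun i => by
      fin_cases i <;> simp [σ])
  have heval : ∀ w, evalWord (σ w) a b⁻¹ = evalWord w a b :=
    DFunLike.congr_fun (FreeGroup.ext_hom
      ((FreeGroup.lift fun i : Fin 2 => if i = 0 then a else b⁻¹).comp σ)
      (FreeGroup.lift fun i : Fin 2 => if i = 0 then a else b) fun i => by
        fin_cases i <;> simp [σ])
  refine ⟨σ w, fun h1 => hw ?_, by rwa [heval]⟩
  rw [← hσσ w, h1, _root_.map_one]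

def cuspWord : FreeGroup (Fin 2) :=
  of 0 * (of 1)⁻¹ * (of 0)⁻¹ * of 1 * (of 0)⁻¹ * (of 1)⁻¹ * of 0

lemma coe_S_inv : ((S⁻¹ : SL2) : Matrix (Fin 2) (Fin 2) ℂ) = !![1, 0; -1, 1] := by
  rw [Matrix.SpecialLinearGroup.coe_inv, Matrix.adjugate_fin_two]
  simp [S]

lemma coe_T_inv (lam : ℂ) :
    (((T lam)⁻¹ : SL2) : Matrix (Fin 2) (Fin 2) ℂ) = !![1, -(2 * lam); 0, 1] := by
  rw [Matrix.SpecialLinearGroup.coe_inv, Matrix.adjugate_fin_two]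
  simp [T]

lemma T_neg (lam : ℂ) : T (-lam) = (T lam)⁻¹ := by
  ext : 1
  rw [coe_T_inv]
  simp [T]

lemma coe_evalWord_cuspWord (lam : ℂ) :
    ((evalWord cuspWord S (T lam) : SL2) : Matrix (Fin 2) (Fin 2) ℂ) =
      !![1 - 4 * lam ^ 2 + 8 * lam ^ 3, 8 * lam ^ 3 - 2 * lam;
         4 * lam * (2 * lam ^ 2 - 2 * lam + 1), 1 - 4 * lam ^ 2 + 8 * lam ^ 3] := by
  simp only [evalWord, cuspWord, _root_.map_mul, _root_.map_inv, lift_apply_of, Fin.isValue,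
    one_ne_zero, if_true, if_false, Matrix.SpecialLinearGroup.coe_mul, coe_S_inv, coe_T_inv]
  simp only [S, T, Matrix.mul_fin_two]
  ring_nf

lemma hasRelation_S_T_of_quadratic {lam : ℂ} (h : 2 * lam ^ 2 - 2 * lam + 1 = 0) :
    HasRelation S (T lam) := by
  have hcomm : Commute (T lam) (evalWord cuspWord S (T lam)) := by
    apply Subtype.ext
    apply Matrix.commute_fin_two_of_upper_of_diag_eq
    · simp [T]
    · simp [T]
    · simp [coe_evalWord_cuspWord, h]
    · simp [coe_evalWord_cuspWord]
  have hrel : evalWord ⁅of (1 : Fin 2), cuspWord⁆ S (T lam) = 1 := by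
    rw [evalWord, map_commutatorElement, lift_apply_of]
    exact commutatorElement_eq_one_iff_commute.mpr hcomm
  refine ⟨⁅of (1 : Fin 2), cuspWord⁆, by decide, Or.inl ?_⟩
  rw [hrel, Matrix.SpecialLinearGroup.coe_one]

theorem whitehead_points_nonfree :
    ∀ lam ∈ ({(1 + Complex.I) / 2, (1 - Complex.I) / 2,
              (-1 + Complex.I) / 2, (-1 - Complex.I) / 2} : Set ℂ),
      HasRelation S (T lam) := by
  have hplus : HasRelation S (T ((1 + Complex.I) / 2)) :=
    hasRelation_S_T_of_quadratic (by linear_combination Complex.I_sq / 2)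
  have hminus : HasRelation S (T ((1 - Complex.I) / 2)) :=
    hasRelation_S_T_of_quadratic (by linear_combination Complex.I_sq / 2)
  rintro lam (rfl | rfl | rfl | rfl)
  · exact hplus
  · exact hminus
  · rw [show (-1 + Complex.I) / 2 = -((1 - Complex.I) / 2) by ring, T_neg]
    exact hasRelation_inv_right hminus
  · rw [show (-1 - Complex.I) / 2 = -((1 + Complex.I) / 2) by ring, T_neg]
    exact hasRelation_inv_right hplus

end
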